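/- Let φ : S → T be a locally idempotent pure homomorphism of inverse semigroups: for every idempotent e ∈ E(S) and every s ∈ S with s = e·s·e, if φ(s) is idempotent then s is idempotent. Let χ be a semi-character of E(S) and let s, t ∈ S with χ(s*·s) = true and χ(t*·t) = true. Assume (i) χ(s*·e·s) = χ(t*·e·t) for all e ∈ E(S), and (ii) there exists v ∈ T with v ≤ φ(s) and v ≤ φ(t) such that some x ∈ E(S) satisfies χ(x) = true and φ(x) ≤ v*·v. Then there exists u ∈ S with u ≤ s, u ≤ t, and χ(u*·u) = true. -/
import Mathlib


class InverseSemigroup (S : Type*) extends Semigroup S, StarMul S where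
  mul_star_mul_self : ∀ s : S, s * star s * s = s
  star_mul_star_self : ∀ s : S, star s * s * star s = star s
  idem_comm : ∀ e f : S, e * e = e → f * f = f → e * f = f * e

namespace InverseSemigroup

variable {S : Type*} [InverseSemigroup S]

lemma idem_star_mul (s : S) : (star s * s) * (star s * s) = star s * s := by
  calc (star s * s) * (star s * s) = star s * (s * star s * s) := by
        simp only [mul_assoc]
    _ = star s * s := by rw [mul_star_mul_self]

lemma mul_star_idem (s : S) : (s * star s) * (s * star s) = s * star s := by
  calc (s * star s) * (s * star s) = s * (star s * s * star s) := by
        simp only [mul_assoc]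
    _ = s * star s := by rw [star_mul_star_self]

lemma idem_mul {e f : S} (he : e * e = e) (hf : f * f = f) :
    (e * f) * (e * f) = e * f := by
  have hc : f * e = e * f := idem_comm f e hf he
  calc (e * f) * (e * f) = e * (f * e) * f := by simp only [mul_assoc]
    _ = e * (e * f) * f := by rw [hc]
    _ = (e * e) * (f * f) := by simp only [mul_assoc]
    _ = e * f := by rw [he, hf]

lemma idem_conj {e : S} (he : e * e = e) (s : S) :
    (star s * e * s) * (star s * e * s) = star s * e * s := by
  have hf : (s * star s) * (s * star s) = s * star s := mul_star_idem s
  have hc : e * (s * star s) = (s * star s) * e := idem_comm e _ he hf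
  calc (star s * e * s) * (star s * e * s)
      = star s * (e * (s * star s)) * (e * s) := by simp only [mul_assoc]
    _ = star s * ((s * star s) * e) * (e * s) := by rw [hc]
    _ = star s * (s * star s) * (e * e) * s := by simp only [mul_assoc]
    _ = star s * (s * star s) * e * s := by rw [he]
    _ = (star s * s * star s) * e * s := by simp only [mul_assoc]
    _ = star s * e * s := by rw [star_mul_star_self]

lemma conj_mul {e f : S} (_he : e * e = e) (hf : f * f = f) (s : S) :
    (star s * e * s) * (star s * f * s) = star s * (e * f) * s := by
  have hss : (s * star s) * (s * star s) = s * star s := mul_star_idem s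
  have hc : (s * star s) * f = f * (s * star s) := idem_comm _ _ hss hf
  calc (star s * e * s) * (star s * f * s)
      = star s * e * ((s * star s) * f) * s := by simp only [mul_assoc]
    _ = star s * e * (f * (s * star s)) * s := by rw [hc]
    _ = star s * (e * f) * (s * star s * s) := by simp only [mul_assoc]
    _ = star s * (e * f) * s := by rw [mul_star_mul_self]

lemma conj_ss (s : S) : star s * (s * star s) * s = star s * s := by
  calc star s * (s * star s) * s = (star s * s * star s) * s := by
        simp only [mul_assoc]
    _ = star s * s := by rw [star_mul_star_self]

end InverseSemigroup

open InverseSemigroup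

/-- The natural partial order on an inverse semigroup: `s ≤ t` iff `s = t·s*·s`. -/
def nle {S : Type*} [InverseSemigroup S] (s t : S) : Prop := s = t * (star s * s)

/-- `σ(s) = σ(t)` iff `s·e = t·e` for some idempotent `e`. -/
def sigmaEq {S : Type*} [InverseSemigroup S] (s t : S) : Prop :=
  ∃ e : S, e * e = e ∧ s * e = t * e

/-- `S` is E-unitary if every element above a nonzero idempotent is idempotent. -/
def EUnitary (S : Type*) [InverseSemigroup S] : Prop :=
  ∀ e s : S, e * e = e → nle e s → s * s = s

/-- The semilattice of idempotents of an inverse semigroup. -/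
def Idem (S : Type*) [InverseSemigroup S] : Type _ := {e : S // e * e = e}

instance {S : Type*} [InverseSemigroup S] : Mul (Idem S) :=
  ⟨fun e f => ⟨e.1 * f.1, idem_mul e.2 f.2⟩⟩

/-- A semi-character of a semilattice. -/
structure SemiChar (E : Type*) [Mul E] where
  toFun : E → Bool
  map_mul' : ∀ e f : E, toFun (e * f) = (toFun e && toFun f)
  exists_true : ∃ e : E, toFun e = true

/-- The space `Ê` of semi-characters, with the subspace topology from `Bool^E`. -/
instance {E : Type*} [Mul E] : TopologicalSpace (SemiChar E) :=
  TopologicalSpace.induced (fun χ => χ.toFun) Pi.topologicalSpace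

/-- For `e` idempotent, `s*·e·s` is idempotent. -/
def conjIdem {S : Type*} [InverseSemigroup S] (s : S) (e : Idem S) : Idem S :=
  ⟨star s * e.1 * s, idem_conj e.2 s⟩

/-- The semi-character `s·χ` defined by `(s·χ)(e) = χ(s*·e·s)`. -/
def sDot {S : Type*} [InverseSemigroup S] (s : S) (χ : SemiChar (Idem S))
    (h : χ.toFun ⟨star s * s, idem_star_mul s⟩ = true) : SemiChar (Idem S) where
  toFun e := χ.toFun (conjIdem s e)
  map_mul' e f := by
    have heq : conjIdem s (e * f) = conjIdem s e * conjIdem s f :=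
      Subtype.ext (conj_mul e.2 f.2 s).symm
    simp only [heq, χ.map_mul']
  exists_true := ⟨⟨s * star s, mul_star_idem s⟩, by
    have heq : conjIdem s ⟨s * star s, mul_star_idem s⟩
        = (⟨star s * s, idem_star_mul s⟩ : Idem S) := Subtype.ext (conj_ss s)
    simp only [heq]; exact h⟩

namespace InverseSemigroup

variable {S : Type*} [InverseSemigroup S]

lemma star_of_idem {e : S} (he : e * e = e) : star e = e := by
  have ht : (e * star e) * (e * star e) = e * star e := mul_star_idem e
  have hte : (e * star e) * e = e := mul_star_mul_self e
  have het : e * (e * star e) = e * star e := by rw [← mul_assoc, he]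
  have h1 : e * star e = e := by
    have hc := idem_comm e (e * star e) he ht
    rw [het, hte] at hc
    exact hc
  have hu : (star e * e) * (star e * e) = star e * e := idem_star_mul e
  have h2 : star e = star e * e := by
    calc star e = star e * e * star e := (star_mul_star_self e).symm
      _ = star e * (e * star e) := by rw [mul_assoc]
      _ = star e * e := by rw [h1]
  have h3 : e * (star e * e) = e := by rw [← mul_assoc, h1, he]
  have h4 : (star e * e) * e = star e * e := by rw [mul_assoc, he]
  have hc := idem_comm e (star e * e) he hu
  rw [h3, h4] at hc
  exact h2.trans hc.symm

lemma nle_mul_idem (s : S) {e : S} (he : e * e = e) : nle (s * e) s := by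
  show s * e = s * (star (s * e) * (s * e))
  have hse : star (s * e) = e * star s := by rw [star_mul, star_of_idem he]
  have hcomm : e * (star s * s) = (star s * s) * e :=
    idem_comm _ _ he (idem_star_mul s)
  have key : s * (star (s * e) * (s * e)) = s * e := by
    rw [hse]
    calc s * ((e * star s) * (s * e))
        = s * (e * (star s * s) * e) := by simp only [mul_assoc]
      _ = s * ((star s * s) * e * e) := by rw [hcomm]
      _ = s * (star s * s) * (e * e) := by simp only [mul_assoc]
      _ = s * (star s * s) * e := by rw [he]
      _ = (s * star s * s) * e := by simp only [mul_assoc]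
      _ = s * e := by rw [mul_star_mul_self]
  exact key.symm

lemma idem_mul_nle {e : S} (he : e * e = e) (q : S) : nle (e * q) q := by
  show e * q = q * (star (e * q) * (e * q))
  have h1 : star (e * q) = star q * e := by rw [star_mul, star_of_idem he]
  have hcomm : e * (q * star q) = (q * star q) * e :=
    idem_comm _ _ he (mul_star_idem q)
  have key : q * (star (e * q) * (e * q)) = e * q := by
    rw [h1]
    calc q * ((star q * e) * (e * q))
        = q * star q * (e * e) * q := by simp only [mul_assoc]
      _ = (q * star q) * e * q := by rw [he]
      _ = e * (q * star q) * q := by rw [← hcomm]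
      _ = e * (q * star q * q) := by simp only [mul_assoc]
      _ = e * q := by rw [mul_star_mul_self]
  exact key.symm

lemma nle_trans {a b c : S} (hab : nle a b) (hbc : nle b c) : nle a c := by
  have ha : a = b * (star a * a) := hab
  have hb : b = c * (star b * b) := hbc
  have he : (star a * a) * (star a * a) = star a * a := idem_star_mul a
  have hcomm : (star a * a) * (star b * b) = (star b * b) * (star a * a) :=
    idem_comm _ _ he (idem_star_mul b)
  have key : star a * a = (star b * b) * (star a * a) := by
    calc star a * a
        = star (b * (star a * a)) * (b * (star a * a)) := by rw [← ha]
      _ = (star a * a) * star b * (b * (star a * a)) := by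
          rw [star_mul, star_of_idem he]
      _ = (star a * a) * ((star b * b) * (star a * a)) := by
          simp only [mul_assoc]
      _ = (star b * b) * (star a * a) := by
          rw [← mul_assoc, hcomm, mul_assoc, he]
  show a = c * (star a * a)
  calc a = b * (star a * a) := ha
    _ = (c * (star b * b)) * (star a * a) := by rw [← hb]
    _ = c * ((star b * b) * (star a * a)) := by rw [mul_assoc]
    _ = c * (star a * a) := by rw [← key]

lemma star_mul_u (p q : S) :
    star (p * star p * q) * (p * star p * q) = star q * (p * star p) * q := by
  have h1 : star (p * star p * q) = star q * (p * star p) := by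
    rw [star_mul, star_of_idem (mul_star_idem p)]
  rw [h1]
  calc star q * (p * star p) * (p * star p * q)
      = star q * ((p * star p) * (p * star p)) * q := by simp only [mul_assoc]
    _ = star q * (p * star p) * q := by rw [mul_star_idem]

lemma nle_meet {p q : S} (hsw : star q * p = star p * q)
    (hai : (star p * q) * (star p * q) = star p * q) :
    nle (p * star p * q) p := by
  show p * star p * q = p * (star (p * star p * q) * (p * star p * q))
  rw [star_mul_u]
  have key : p * (star q * (p * star p) * q) = p * star p * q := by
    calc p * (star q * (p * star p) * q)
        = p * ((star q * p) * (star p * q)) := by simp only [mul_assoc]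
      _ = p * ((star p * q) * (star p * q)) := by rw [hsw]
      _ = p * (star p * q) := by rw [hai]
      _ = p * star p * q := by rw [← mul_assoc]
  exact key.symm

end InverseSemigroup

theorem stmt14 {S T : Type*} [InverseSemigroup S] [InverseSemigroup T]
    (φ : S → T) (hhom : ∀ x y : S, φ (x * y) = φ x * φ y)
    (hstar : ∀ x : S, φ (star x) = star (φ x))
    (hlip : ∀ e s : S, e * e = e → s = e * s * e → φ s * φ s = φ s → s * s = s)
    (χ : SemiChar (Idem S)) (s t : S)
    (hs : χ.toFun ⟨star s * s, idem_star_mul s⟩ = true)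
    (ht : χ.toFun ⟨star t * t, idem_star_mul t⟩ = true)
    (h1 : ∀ e : Idem S, χ.toFun (conjIdem s e) = χ.toFun (conjIdem t e))
    (h2 : ∃ v : T, nle v (φ s) ∧ nle v (φ t) ∧
      ∃ x : Idem S, χ.toFun x = true ∧ nle (φ x.1) (star v * v)) :
    ∃ u : S, nle u s ∧ nle u t ∧
      χ.toFun ⟨star u * u, idem_star_mul u⟩ = true := by
  obtain ⟨v, hvs, hvt, ⟨x0, hx0⟩, hχx, hxv⟩ := h2
  have hsx0 : star x0 = x0 := star_of_idem hx0
  have hφx : φ x0 * φ x0 = φ x0 := by rw [← hhom, hx0]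
  have hsφx : star (φ x0) = φ x0 := star_of_idem hφx
  have hxv' : φ x0 = (star v * v) * (star (φ x0) * φ x0) := hxv
  rw [hsφx, hφx] at hxv'
  have hvs' : v = φ s * (star v * v) := hvs
  have hvt' : v = φ t * (star v * v) := hvt
  have hkey : φ (s * x0) = φ (t * x0) := by
    rw [hhom, hhom]
    have h_s : φ s * φ x0 = v * φ x0 := by
      conv_lhs => rw [hxv', ← mul_assoc, ← hvs']
    have h_t : φ t * φ x0 = v * φ x0 := by
      conv_lhs => rw [hxv', ← mul_assoc, ← hvt']
    rw [h_s, h_t]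
  have hsp : star (t * x0) = x0 * star t := by rw [star_mul, hsx0]
  have hsq : star (s * x0) = x0 * star s := by rw [star_mul, hsx0]
  have hconj : star (t * x0) * (s * x0) = x0 * (star (t * x0) * (s * x0)) * x0 := by
    rw [hsp]
    calc x0 * star t * (s * x0)
        = (x0 * x0) * star t * (s * (x0 * x0)) := by rw [hx0]
      _ = x0 * (x0 * star t * (s * x0)) * x0 := by simp only [mul_assoc]
  have hφa : φ (star (t * x0) * (s * x0)) * φ (star (t * x0) * (s * x0))
      = φ (star (t * x0) * (s * x0)) := by
    rw [hhom, hstar, hkey]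
    exact idem_star_mul _
  have haidem : (star (t * x0) * (s * x0)) * (star (t * x0) * (s * x0))
      = star (t * x0) * (s * x0) := hlip x0 _ hx0 hconj hφa
  have hastar : star (star (t * x0) * (s * x0)) = star (t * x0) * (s * x0) :=
    star_of_idem haidem
  have hswap : star (s * x0) * (t * x0) = star (t * x0) * (s * x0) := by
    rwa [star_mul, star_star] at hastar
  refine ⟨(t * x0) * star (t * x0) * (s * x0), ?_, ?_, ?_⟩
  · exact nle_trans (idem_mul_nle (mul_star_idem (t * x0)) (s * x0))
      (nle_mul_idem s hx0)
  · exact nle_trans (nle_meet hswap haidem) (nle_mul_idem t hx0)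
  · have hF : ((t * x0) * star (t * x0)) * ((t * x0) * star (t * x0))
        = (t * x0) * star (t * x0) := mul_star_idem (t * x0)
    set F : Idem S := (⟨(t * x0) * star (t * x0), hF⟩ : Idem S) with hFdef
    set X : Idem S := (⟨x0, hx0⟩ : Idem S) with hXdef
    set Tt : Idem S := (⟨star t * t, idem_star_mul t⟩ : Idem S) with hTtdef
    have hEu : (⟨star ((t * x0) * star (t * x0) * (s * x0)) *
          ((t * x0) * star (t * x0) * (s * x0)),
          idem_star_mul ((t * x0) * star (t * x0) * (s * x0))⟩ : Idem S)
        = (X * conjIdem s F) * X := by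
      apply Subtype.ext
      show star ((t * x0) * star (t * x0) * (s * x0)) *
          ((t * x0) * star (t * x0) * (s * x0))
        = (x0 * (star s * ((t * x0) * star (t * x0)) * s)) * x0
      rw [star_mul_u, hsq]
      simp only [mul_assoc]
    rw [hEu, χ.map_mul', χ.map_mul', hχx, h1 F]
    have hG : conjIdem t F
        = (Tt * X) * Tt := by
      apply Subtype.ext
      show star t * ((t * x0) * star (t * x0)) * t
        = ((star t * t) * x0) * (star t * t)
      rw [hsp]
      simp only [mul_assoc]
      rw [show x0 * (x0 * (star t * t)) = x0 * (star t * t) from by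
        rw [← mul_assoc, hx0]]
    rw [hG, χ.map_mul', χ.map_mul', hχx, ht]
    simp
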